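/- arXiv:2112.01791 — 2 statements merged into one kernel-verified Lean document; each statement's English description precedes it below -/
import Mathlib

section
/- Let $p > 1$, $m, \beta \in \mathbb{R}$ with $\frac{m+1}{p} > 1 - \beta$. Let $u \in W^{1,p}_{loc}((0,\infty))$ with $y^\beta u' \in L^p((0,\infty); y^m dy)$. Then the limit $u_\infty := \lim_{y \to \infty} u(y)$ exists and is finite, and $\|y^{\beta-1}(u - u_\infty)\|_{L^p((0,\infty); y^m dy)} \le C \|y^\beta u'\|_{L^p((0,\infty); y^m dy)}$ with $C = \left|\frac{m+1}{p} - (1-\beta)\right|^{-1}$. -/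
/-!
With `f = |u'|` and `a = (β - 1) p + m > -1`, the fundamental theorem of calculus gives
`|u y - u∞| ≤ ∫_y^∞ f`, so the claim reduces to the dual Hardy inequality
`∫_0^∞ (∫_y^∞ f)^p y^a dy ≤ ((a + 1) / p)^(-p) ∫_0^∞ f^p t^(a + p) dt`.
It follows from Hölder's inequality on `(y, ∞)` against the weight `t^(-(v + 1))`,
`v = (a + 1) / p`, followed by Tonelli's theorem. The same Hölder bound shows that `f` is
integrable near `∞`, which makes `u∞` exist.
-/

open MeasureTheory Filter
open scoped ENNReal Topology

/-- The weighted measure `y^m dy` on `(0,∞)`. -/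
noncomputable def wm (m : ℝ) : Measure ℝ :=
  (volume.restrict (Set.Ioi 0)).withDensity fun y => ENNReal.ofReal (y ^ m)

open Set ENNReal

lemma measurable_ofReal_rpow_const (c : ℝ) : Measurable fun t : ℝ => ENNReal.ofReal (t ^ c) :=
  (measurable_id.pow_const c).ennreal_ofReal

lemma ofReal_rpow_mul_ofReal_rpow {y : ℝ} (hy : 0 < y) (b c : ℝ) :
    ENNReal.ofReal (y ^ b) * ENNReal.ofReal (y ^ c) = ENNReal.ofReal (y ^ (b + c)) := by
  rw [← ofReal_mul (Real.rpow_nonneg hy.le b), Real.rpow_add hy]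

lemma ofReal_rpow_rpow {y : ℝ} (hy : 0 < y) (b c : ℝ) :
    ENNReal.ofReal (y ^ b) ^ c = ENNReal.ofReal (y ^ (b * c)) := by
  rw [ofReal_rpow_of_pos (Real.rpow_pos_of_pos hy b), Real.rpow_mul hy.le]

lemma enorm_rpow_mul {y : ℝ} (hy : 0 < y) (c x : ℝ) :
    ‖y ^ c * x‖ₑ = ENNReal.ofReal (y ^ c) * ‖x‖ₑ := by
  rw [enorm_mul, Real.enorm_of_nonneg (Real.rpow_nonneg hy.le c)]

lemma lintegral_Ioi_ofReal_rpow {y c : ℝ} (hy : 0 < y) (hc : c < -1) :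
    ∫⁻ t in Ioi y, ENNReal.ofReal (t ^ c) = ENNReal.ofReal (y ^ (c + 1) / -(c + 1)) := by
  rw [← ofReal_integral_eq_lintegral_ofReal (integrableOn_Ioi_rpow_of_lt hc hy)
      (ae_restrict_of_forall_mem measurableSet_Ioi fun t ht => Real.rpow_nonneg (hy.trans ht).le c),
    integral_Ioi_rpow_of_lt hc hy, neg_div, div_neg]

lemma lintegral_Ioo_zero_ofReal_rpow {t b : ℝ} (ht : 0 < t) (hb : -1 < b) :
    ∫⁻ y in Ioo 0 t, ENNReal.ofReal (y ^ b) = ENNReal.ofReal (t ^ (b + 1) / (b + 1)) := by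
  have hint : IntegrableOn (fun y : ℝ => y ^ b) (Ioc 0 t) :=
    (intervalIntegrable_iff_integrableOn_Ioc_of_le ht.le).mp
      (intervalIntegral.intervalIntegrable_rpow' hb)
  rw [Measure.restrict_congr_set Ioo_ae_eq_Ioc,
    ← ofReal_integral_eq_lintegral_ofReal hint
      (ae_restrict_of_forall_mem measurableSet_Ioc fun y hy => Real.rpow_nonneg hy.1.le b),
    ← intervalIntegral.integral_of_le ht.le, integral_rpow (Or.inl hb),
    Real.zero_rpow (by linarith), sub_zero]

lemma eLpNorm_rpow_mul_wm (m c : ℝ) {p : ℝ} (hp : 0 < p) (h : ℝ → ℝ) :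
    eLpNorm (fun y => y ^ c * h y) (ENNReal.ofReal p) (wm m) =
      (∫⁻ y in Ioi 0, ‖h y‖ₑ ^ p * ENNReal.ofReal (y ^ (c * p + m))) ^ (1 / p) := by
  rw [eLpNorm_eq_lintegral_rpow_enorm_toReal (by simp [hp]) ofReal_ne_top,
    toReal_ofReal hp.le, wm,
    lintegral_withDensity_eq_lintegral_mul_non_measurable _ (measurable_ofReal_rpow_const m)
      (ae_of_all _ fun y => ofReal_lt_top)]
  congr 1
  refine setLIntegral_congr_fun measurableSet_Ioi fun y (hy : 0 < y) => ?_
  simp only [Pi.mul_apply]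
  rw [enorm_rpow_mul hy, mul_rpow_of_nonneg _ _ hp.le, ofReal_rpow_rpow hy, mul_comm,
    mul_right_comm, ofReal_rpow_mul_ofReal_rpow hy, mul_comm]

lemma rpow_lintegral_Ioi_le {p v y : ℝ} (hp : 1 < p) (hv : 0 < v) (hy : 0 < y)
    {f : ℝ → ℝ≥0∞} (hf : Measurable f) :
    (∫⁻ t in Ioi y, f t) ^ p ≤ ENNReal.ofReal (y ^ (-v) / v) ^ (p - 1) *
      ∫⁻ t in Ioi y, f t ^ p * ENNReal.ofReal (t ^ ((v + 1) * (p - 1))) := by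
  set q := p.conjExponent
  have hpq : p.HolderConjugate q := .conjExponent hp
  set s := (v + 1) / q
  have hsq : s * q = v + 1 := div_mul_cancel₀ _ hpq.symm.pos.ne'
  have hsp : s * p = (v + 1) * (p - 1) := by
    rw [div_mul_eq_mul_div, mul_div_assoc, hpq.div_conj_eq_sub_one]
  -- Hölder's inequality for `f = (f t * t ^ s) * t ^ (-s)`
  have hsplit : ∫⁻ t in Ioi y, f t = ∫⁻ t in Ioi y,
      ((fun t => f t * ENNReal.ofReal (t ^ s)) * fun t => ENNReal.ofReal (t ^ (-s))) t :=
    setLIntegral_congr_fun measurableSet_Ioi fun t (ht : y < t) => by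
      rw [Pi.mul_apply, mul_assoc, ofReal_rpow_mul_ofReal_rpow (hy.trans ht), add_neg_cancel,
        Real.rpow_zero, ofReal_one, mul_one]
  have hholder := ENNReal.lintegral_mul_le_Lp_mul_Lq (volume.restrict (Ioi y)) hpq
    (hf.mul (measurable_ofReal_rpow_const s)).aemeasurable
    (measurable_ofReal_rpow_const (-s)).aemeasurable
  have hfirst : ∫⁻ t in Ioi y, (f t * ENNReal.ofReal (t ^ s)) ^ p =
      ∫⁻ t in Ioi y, f t ^ p * ENNReal.ofReal (t ^ ((v + 1) * (p - 1))) :=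
    setLIntegral_congr_fun measurableSet_Ioi fun t (ht : y < t) => by
      rw [mul_rpow_of_nonneg _ _ hpq.nonneg, ofReal_rpow_rpow (hy.trans ht), hsp]
  have hsecond :
      ∫⁻ t in Ioi y, ENNReal.ofReal (t ^ (-s)) ^ q = ENNReal.ofReal (y ^ (-v) / v) := by
    rw [setLIntegral_congr_fun measurableSet_Ioi fun t (ht : y < t) =>
        ofReal_rpow_rpow (hy.trans ht) (-s) q,
      neg_mul, hsq, lintegral_Ioi_ofReal_rpow hy (by linarith)]
    congr 3 <;> ring
  rw [hsplit]
  calc _ ≤ ((∫⁻ t in Ioi y, (f t * ENNReal.ofReal (t ^ s)) ^ p) ^ (1 / p) *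
        (∫⁻ t in Ioi y, ENNReal.ofReal (t ^ (-s)) ^ q) ^ (1 / q)) ^ p := by
        gcongr; exact hholder
    _ = _ := by
      rw [hfirst, hsecond, mul_rpow_of_nonneg _ _ hpq.nonneg, ← rpow_mul, ← rpow_mul,
        one_div_mul_cancel hpq.ne_zero, rpow_one, one_div_mul_eq_div, hpq.div_conj_eq_sub_one,
        mul_comm]

lemma lintegral_lintegral_Ioi_mul_rpow {c : ℝ} (hc : 0 < c) {φ : ℝ → ℝ≥0∞}
    (hφ : Measurable φ) :
    ∫⁻ y in Ioi 0, (∫⁻ t in Ioi y, φ t) * ENNReal.ofReal (y ^ (c - 1)) =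
      ∫⁻ t in Ioi 0, φ t * ENNReal.ofReal (t ^ c / c) := by
  let W : ℝ → ℝ → ℝ≥0∞ := fun y t =>
    if y < t then φ t * ENNReal.ofReal (y ^ (c - 1)) else 0
  have hW : Measurable (Function.uncurry W) :=
    Measurable.ite (measurableSet_lt measurable_fst measurable_snd)
      ((hφ.comp measurable_snd).mul ((measurable_ofReal_rpow_const _).comp measurable_fst))
      measurable_const
  have hinner : ∀ y ∈ Ioi (0 : ℝ),
      ∫⁻ t in Ioi 0, W y t = (∫⁻ t in Ioi y, φ t) * ENNReal.ofReal (y ^ (c - 1)) := by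
    intro y (hy : 0 < y)
    have hWy : W y = (Ioi y).indicator fun t => φ t * ENNReal.ofReal (y ^ (c - 1)) := by
      ext t; simp [W, indicator_apply]
    rw [hWy, lintegral_indicator measurableSet_Ioi, Measure.restrict_restrict measurableSet_Ioi,
      inter_eq_left.mpr (Ioi_subset_Ioi hy.le), lintegral_mul_const' _ _ ofReal_ne_top]
  have houter :
      ∀ t ∈ Ioi (0 : ℝ), ∫⁻ y in Ioi 0, W y t = φ t * ENNReal.ofReal (t ^ c / c) := by
    intro t (ht : 0 < t)
    have hWt :
        (fun y => W y t) = (Iio t).indicator fun y => φ t * ENNReal.ofReal (y ^ (c - 1)) := by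
      ext y; simp [W, indicator_apply]
    rw [hWt, lintegral_indicator measurableSet_Iio, Measure.restrict_restrict measurableSet_Iio,
      Iio_inter_Ioi, lintegral_const_mul _ (measurable_ofReal_rpow_const _),
      lintegral_Ioo_zero_ofReal_rpow ht (by linarith), sub_add_cancel]
  calc _ = ∫⁻ y in Ioi 0, ∫⁻ t in Ioi 0, W y t :=
        (setLIntegral_congr_fun measurableSet_Ioi hinner).symm
    _ = ∫⁻ t in Ioi 0, ∫⁻ y in Ioi 0, W y t := lintegral_lintegral_swap hW.aemeasurable
    _ = _ := setLIntegral_congr_fun measurableSet_Ioi houter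

lemma lintegral_rpow_lintegral_Ioi_mul_rpow_le {p a : ℝ} (hp : 1 < p) (ha : -1 < a)
    {f : ℝ → ℝ≥0∞} (hf : Measurable f) :
    ∫⁻ y in Ioi 0, (∫⁻ t in Ioi y, f t) ^ p * ENNReal.ofReal (y ^ a) ≤
      ENNReal.ofReal (((a + 1) / p)⁻¹ ^ p) *
        ∫⁻ t in Ioi 0, f t ^ p * ENNReal.ofReal (t ^ (a + p)) := by
  set v := (a + 1) / p
  have hv : 0 < v := div_pos (by linarith) (by linarith)
  have hpv : p * v = a + 1 := mul_div_cancel₀ _ (by linarith)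
  set φ : ℝ → ℝ≥0∞ := fun t => f t ^ p * ENNReal.ofReal (t ^ ((v + 1) * (p - 1)))
  have hφ : Measurable φ := (hf.pow_const p).mul (measurable_ofReal_rpow_const _)
  have hweight :
      ∀ y : ℝ, 0 < y → (y ^ (-v) / v) ^ (p - 1) * y ^ a = v ^ (1 - p) * y ^ (v - 1) := by
    intro y hy
    rw [Real.div_rpow (Real.rpow_nonneg hy.le _) hv.le, ← Real.rpow_mul hy.le, div_mul_eq_mul_div,
      ← Real.rpow_add hy, show 1 - p = -(p - 1) by ring, Real.rpow_neg hv.le, div_eq_inv_mul]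
    congr 2
    linarith
  have hpoint : ∀ y ∈ Ioi (0 : ℝ), (∫⁻ t in Ioi y, f t) ^ p * ENNReal.ofReal (y ^ a) ≤
      ENNReal.ofReal (v ^ (1 - p)) *
        ((∫⁻ t in Ioi y, φ t) * ENNReal.ofReal (y ^ (v - 1))) := by
    intro y (hy : 0 < y)
    calc _ ≤ ENNReal.ofReal (y ^ (-v) / v) ^ (p - 1) * (∫⁻ t in Ioi y, φ t) *
          ENNReal.ofReal (y ^ a) := by gcongr; exact rpow_lintegral_Ioi_le hp hv hy hf
      _ = _ := by
        rw [mul_right_comm, ofReal_rpow_of_nonneg (by positivity) (by linarith),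
          ← ofReal_mul (by positivity), hweight y hy, ofReal_mul (by positivity)]
        ring
  have hφv : ∀ t ∈ Ioi (0 : ℝ), φ t * ENNReal.ofReal (t ^ v / v) =
      ENNReal.ofReal v⁻¹ * (f t ^ p * ENNReal.ofReal (t ^ (a + p))) := by
    intro t (ht : 0 < t)
    calc _ = ENNReal.ofReal v⁻¹ *
          (f t ^ p * (ENNReal.ofReal (t ^ ((v + 1) * (p - 1))) * ENNReal.ofReal (t ^ v))) := by
          rw [div_eq_inv_mul, ofReal_mul (inv_nonneg.mpr hv.le)]
          ring
      _ = _ := by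
        rw [ofReal_rpow_mul_ofReal_rpow ht]
        congr 4
        linarith
  calc _ ≤ ∫⁻ y in Ioi 0, ENNReal.ofReal (v ^ (1 - p)) *
        ((∫⁻ t in Ioi y, φ t) * ENNReal.ofReal (y ^ (v - 1))) :=
      setLIntegral_mono' measurableSet_Ioi hpoint
    _ = ENNReal.ofReal (v ^ (1 - p)) * ∫⁻ t in Ioi 0, φ t * ENNReal.ofReal (t ^ v / v) := by
      rw [lintegral_const_mul' _ _ ofReal_ne_top, lintegral_lintegral_Ioi_mul_rpow hv hφ]
    _ = _ := by
      rw [setLIntegral_congr_fun measurableSet_Ioi hφv, lintegral_const_mul' _ _ ofReal_ne_top,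
        ← mul_assoc, ← ofReal_mul (by positivity), Real.inv_rpow hv.le, ← Real.rpow_neg_one,
        ← Real.rpow_add hv, ← Real.rpow_neg hv.le]
      ring_nf

lemma rpow_one_div_lintegral_rpow_lintegral_Ioi_mul_rpow_le {p a : ℝ} (hp : 1 < p) (ha : -1 < a)
    {f : ℝ → ℝ≥0∞} (hf : Measurable f) :
    (∫⁻ y in Ioi 0, (∫⁻ t in Ioi y, f t) ^ p * ENNReal.ofReal (y ^ a)) ^ (1 / p) ≤
      ENNReal.ofReal ((a + 1) / p)⁻¹ *
        (∫⁻ t in Ioi 0, f t ^ p * ENNReal.ofReal (t ^ (a + p))) ^ (1 / p) := by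
  have hp0 : 0 < p := by linarith
  have hv : 0 ≤ ((a + 1) / p)⁻¹ := inv_nonneg.mpr (div_pos (by linarith) hp0).le
  calc _ ≤ (ENNReal.ofReal (((a + 1) / p)⁻¹ ^ p) *
        ∫⁻ t in Ioi 0, f t ^ p * ENNReal.ofReal (t ^ (a + p))) ^ (1 / p) := by
        gcongr
        exact lintegral_rpow_lintegral_Ioi_mul_rpow_le hp ha hf
    _ = _ := by
        rw [mul_rpow_of_nonneg _ _ (by positivity), ← ofReal_rpow_of_nonneg hv hp0.le,
          ← rpow_mul, mul_one_div_cancel hp0.ne', rpow_one]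

lemma lintegral_Ioi_ne_top_of_lintegral_rpow_mul_rpow_ne_top {p a y : ℝ} (hp : 1 < p)
    (ha : -1 < a) (hy : 0 < y) {f : ℝ → ℝ≥0∞} (hf : Measurable f)
    (hJ : ∫⁻ t in Ioi 0, f t ^ p * ENNReal.ofReal (t ^ (a + p)) ≠ ∞) :
    ∫⁻ t in Ioi y, f t ≠ ∞ := by
  have hv : 0 < (a + 1) / (p - 1) := div_pos (by linarith) (by linarith)
  have hholder := rpow_lintegral_Ioi_le hp hv hy hf
  rw [show ((a + 1) / (p - 1) + 1) * (p - 1) = a + p by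
    rw [add_mul, div_mul_cancel₀ _ (by linarith)]; ring] at hholder
  have hpow : (∫⁻ t in Ioi y, f t) ^ p ≠ ∞ := ne_top_of_le_ne_top
    (mul_ne_top (rpow_ne_top_of_nonneg (by linarith) ofReal_ne_top)
      (ne_top_of_le_ne_top hJ (lintegral_mono_set (Ioi_subset_Ioi hy.le)))) hholder
  exact fun htop => hpow (by rw [htop, top_rpow_of_pos (by linarith)])

lemma exists_tendsto_atTop_enorm_sub_le_lintegral_Ioi {u u' : ℝ → ℝ} {a : ℝ}
    (hderiv : ∀ y ∈ Ioi a, HasDerivAt u (u' y) y)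
    (hint : ∀ y ∈ Ioi a, IntegrableOn u' (Ioi y)) :
    ∃ L, Tendsto u atTop (𝓝 L) ∧
      ∀ y ∈ Ioi a, ‖u y - L‖ₑ ≤ ∫⁻ t in Ioi y, ‖u' t‖ₑ := by
  have ha : a + 1 ∈ Ioi a := by simp
  have hlim := tendsto_limUnder_of_hasDerivAt_of_integrableOn_Ioi
    (fun t (ht : a + 1 < t) => hderiv t (lt_trans ha ht)) (hint _ ha)
  refine ⟨_, hlim, fun y hy => ?_⟩
  rw [← enorm_neg, neg_sub, ← integral_Ioi_of_hasDerivAt_of_tendsto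
    (hderiv y hy).continuousAt.continuousWithinAt
    (fun t (ht : y < t) => hderiv t (lt_trans hy ht)) (hint y hy) hlim]
  exact enorm_integral_le_lintegral_enorm _

/-- Trace-Hardy inequality at `∞`: if `(m+1)/p > 1-β` and `y^β u' ∈ L^p_m` then the limit
`u_∞ = lim_{y→∞} u(y)` exists and `‖y^{β-1}(u-u_∞)‖ ≤ C ‖y^β u'‖`. -/
theorem stmt7 (p m β : ℝ) (hp : 1 < p) (h : (m + 1) / p > 1 - β)
    (u u' : ℝ → ℝ) (hderiv : ∀ y, 0 < y → HasDerivAt u (u' y) y)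
    (hmem : MemLp (fun y => y ^ β * u' y) (ENNReal.ofReal p) (wm m)) :
    ∃ uInf : ℝ, Tendsto u atTop (𝓝 uInf) ∧
      eLpNorm (fun y => y ^ (β - 1) * (u y - uInf)) (ENNReal.ofReal p) (wm m) ≤
        ENNReal.ofReal |(m + 1) / p - (1 - β)|⁻¹ *
          eLpNorm (fun y => y ^ β * u' y) (ENNReal.ofReal p) (wm m) := by
  have hp0 : 0 < p := by linarith
  set a := (β - 1) * p + m with ha_def
  have ha : -1 < a := by nlinarith [(lt_div_iff₀ hp0).mp h]
  have hC : |(m + 1) / p - (1 - β)| = (a + 1) / p := by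
    rw [abs_of_pos (sub_pos.mpr h), ha_def]
    field_simp
    ring
  -- `u'` agrees with the measurable function `deriv u` on `(0, ∞)`, where `wm m` lives
  set f : ℝ → ℝ≥0∞ := fun t => ‖deriv u t‖ₑ
  have hf : Measurable f := (measurable_deriv u).enorm
  set J := ∫⁻ t in Ioi 0, f t ^ p * ENNReal.ofReal (t ^ (a + p))
  have hRHS : eLpNorm (fun y => y ^ β * u' y) (ENNReal.ofReal p) (wm m) = J ^ (1 / p) := by
    rw [eLpNorm_rpow_mul_wm m β hp0, show β * p + m = a + p by ring]
    congr 1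
    exact setLIntegral_congr_fun measurableSet_Ioi fun y hy => by rw [← (hderiv y hy).deriv]
  have hJ : J ≠ ∞ := by
    have hlt := hmem.eLpNorm_lt_top
    rw [hRHS] at hlt
    exact fun hJ => hlt.ne (by rw [hJ, top_rpow_of_pos (by positivity)])
  obtain ⟨L, hL, hLy⟩ := exists_tendsto_atTop_enorm_sub_le_lintegral_Ioi (a := 0)
    (fun y hy => (hderiv y hy).differentiableAt.hasDerivAt)
    (fun y hy => ⟨(measurable_deriv u).aestronglyMeasurable,
      (lintegral_Ioi_ne_top_of_lintegral_rpow_mul_rpow_ne_top hp ha hy hf hJ).lt_top⟩)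
  refine ⟨L, hL, ?_⟩
  rw [hRHS, eLpNorm_rpow_mul_wm m (β - 1) hp0, hC]
  refine (rpow_le_rpow ?_ (by positivity)).trans
    (rpow_one_div_lintegral_rpow_lintegral_Ioi_mul_rpow_le hp ha hf)
  exact setLIntegral_mono' measurableSet_Ioi fun y hy => by gcongr; exact hLy y hy
end

section
/- Let $p > 1$, $m \in \mathbb{R}$, $\alpha_2 < 2$, with $\frac{m+1}{p} < 2 - \alpha_2$. Let $u \in W^{2,p}_{loc}((0,\infty))$ with $y^{\alpha_2}(u'' + u'/y) \in L^p((0,\infty); y^m dy)$. Then $\lim_{y \to 0^+} u(y)$ exists in $\mathbb{R}$ if and only if $\lim_{y \to 0^+} y\, u'(y) = 0$. -/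
open MeasureTheory Filter
open scoped ENNReal Topology

open Set Real

/-! With `v = y u'` one has `v' = y ^ (1 - α₂) f`, where `f = y ^ α₂ (u'' + u' / y)` lies in
`L^p(y^m dy)`. Hölder's inequality gives `∫₀ˢ |v'| ≤ C s ^ γ` with
`γ = 2 - α₂ - (m + 1) / p > 0`, so `v` has a limit `v₀` at `0⁺` and `|v y - v₀| ≤ C y ^ γ`.
Then `(u - v₀ log)' = (v - v₀) / y = O(y ^ (γ - 1))` is integrable near `0`, so `u - v₀ log y`
converges, and since `log y → -∞`, `u` converges if and only if `v₀ = 0`. -/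

theorem exists_tendsto_nhdsGT_of_integrableOn_deriv {g g' : ℝ → ℝ} {a b : ℝ} (hab : a < b)
    (hg : ∀ y ∈ Ioc a b, HasDerivAt g (g' y) y) (hint : IntegrableOn g' (Ioc a b)) :
    ∃ L, Tendsto g (𝓝[>] a) (𝓝 L) ∧ ∀ y ∈ Ioc a b, g y = L + ∫ t in a..y, g' t := by
  have hii : IntervalIntegrable g' volume a b :=
    (intervalIntegrable_iff_integrableOn_Ioc_of_le hab.le).2 hint
  set L := g b - ∫ t in a..b, g' t
  have hg_eq : ∀ y ∈ Ioc a b, g y = L + ∫ t in a..y, g' t := by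
    intro y hy
    have hftc : ∫ t in y..b, g' t = g b - g y := by
      refine intervalIntegral.integral_eq_sub_of_hasDerivAt (fun t ht => hg t ?_)
        (hii.mono_set (by simp [uIcc_of_le hab.le, uIcc_of_le hy.2, Icc_subset_Icc_left hy.1.le]))
      rw [uIcc_of_le hy.2] at ht
      exact ⟨hy.1.trans_le ht.1, ht.2⟩
    have hsplit := intervalIntegral.integral_interval_sub_left (c := y) hii
      (hii.mono_set (by simp [uIcc_of_le hab.le, uIcc_of_le hy.1.le, Icc_subset_Icc_right hy.2]))
    linarith
  refine ⟨L, ?_, hg_eq⟩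
  have hprim : ContinuousWithinAt (fun y => L + ∫ t in a..y, g' t) (Icc a b) a := by
    have := intervalIntegral.continuousOn_primitive_interval' hii left_mem_uIcc
    rw [uIcc_of_le hab.le] at this
    exact continuousWithinAt_const.add (this a (left_mem_Icc.2 hab.le))
  rw [← nhdsWithin_Ioc_eq_nhdsGT hab]
  have hlim : Tendsto (fun y => L + ∫ t in a..y, g' t) (𝓝[Ioc a b] a) (𝓝 L) := by
    simpa using (hprim.mono Ioc_subset_Icc_self).tendsto
  exact hlim.congr' (eventually_nhdsWithin_of_forall fun y hy => (hg_eq y hy).symm)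

theorem exists_tendsto_sub_mul_log_of_abs_mul_deriv_sub_le {u u' : ℝ → ℝ} {c C γ : ℝ}
    (hγ : 0 < γ) (hu : ∀ y, 0 < y → HasDerivAt u (u' y) y)
    (hbound : ∀ y ∈ Ioc (0 : ℝ) 1, |y * u' y - c| ≤ C * y ^ γ) :
    ∃ W, Tendsto (fun y => u y - c * log y) (𝓝[>] 0) (𝓝 W) := by
  have hw : ∀ y ∈ Ioc (0 : ℝ) 1,
      HasDerivAt (fun y => u y - c * log y) ((y * u' y - c) / y) y := by
    intro y hy
    refine ((hu y hy.1).sub ((hasDerivAt_log hy.1.ne').const_mul c)).congr_deriv ?_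
    rw [sub_div, mul_div_cancel_left₀ _ hy.1.ne', div_eq_mul_inv]
  have hmeas : AEStronglyMeasurable (fun y => (y * u' y - c) / y) (volume.restrict (Ioc 0 1)) :=
    (measurable_deriv _).aestronglyMeasurable.congr <|
      (ae_restrict_iff' measurableSet_Ioc).2 (ae_of_all _ fun y hy => (hw y hy).deriv)
  have hdom : IntegrableOn (fun y : ℝ => C * y ^ (γ - 1)) (Ioc 0 1) :=
    ((intervalIntegrable_iff_integrableOn_Ioc_of_le zero_le_one).1
      (intervalIntegral.intervalIntegrable_rpow' (by linarith))).const_mul C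
  refine (exists_tendsto_nhdsGT_of_integrableOn_deriv zero_lt_one hw
    (hdom.mono' hmeas ?_)).imp fun W hW => hW.1
  filter_upwards [ae_restrict_mem measurableSet_Ioc] with y hy
  calc ‖(y * u' y - c) / y‖ = |y * u' y - c| / y := by
        rw [norm_div, norm_of_nonneg hy.1.le, norm_eq_abs]
    _ ≤ C * y ^ γ / y := div_le_div_of_nonneg_right (hbound y hy) hy.1.le
    _ = C * y ^ (γ - 1) := by rw [mul_div_assoc, ← rpow_sub_one hy.1.ne']

theorem exists_tendsto_nhdsGT_zero_iff_of_tendsto_sub_mul_log {u : ℝ → ℝ} {c W : ℝ}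
    (hw : Tendsto (fun y => u y - c * log y) (𝓝[>] 0) (𝓝 W)) :
    (∃ L, Tendsto u (𝓝[>] 0) (𝓝 L)) ↔ c = 0 := by
  constructor
  · rintro ⟨L, hL⟩
    by_contra hc
    have hlog : Tendsto (fun y => (u y - (u y - c * log y)) / c) (𝓝[>] 0) (𝓝 ((L - W) / c)) :=
      (hL.sub hw).div_const c
    refine not_tendsto_nhds_of_tendsto_atBot tendsto_log_nhdsGT_zero _ (hlog.congr fun y => ?_)
    rw [sub_sub_cancel, mul_div_cancel_left₀ _ hc]
  · rintro rfl
    exact ⟨W, by simpa using hw⟩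

theorem volume_restrict_Ioi_absolutelyContinuous_wm (m : ℝ) : volume.restrict (Ioi 0) ≪ wm m :=
  withDensity_absolutelyContinuous' (by fun_prop) <| (ae_restrict_iff' measurableSet_Ioi).2 <|
    ae_of_all _ fun t ht => by simpa using rpow_pos_of_pos ht m

theorem setLIntegral_Ioc_wm {m s : ℝ} {f : ℝ → ℝ≥0∞}
    (hf : AEMeasurable f ((wm m).restrict (Ioc 0 s))) :
    ∫⁻ t in Ioc 0 s, f t ∂wm m = ∫⁻ t in Ioc 0 s, ENNReal.ofReal (t ^ m) * f t := by
  have hrestrict : (wm m).restrict (Ioc 0 s)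
      = (volume.restrict (Ioc 0 s)).withDensity fun t => ENNReal.ofReal (t ^ m) := by
    rw [wm, restrict_withDensity measurableSet_Ioc, Measure.restrict_restrict measurableSet_Ioc,
      inter_eq_left.2 Ioc_subset_Ioi_self]
  rw [hrestrict] at hf ⊢
  exact lintegral_withDensity_eq_lintegral_mul₀' (by fun_prop) hf

theorem lintegral_Ioc_rpow {e s : ℝ} (he : -1 < e) (hs : 0 < s) :
    ∫⁻ t in Ioc 0 s, ENNReal.ofReal (t ^ e) = ENNReal.ofReal (s ^ (e + 1) / (e + 1)) := by
  have hi : IntegrableOn (fun t : ℝ => t ^ e) (Ioc 0 s) :=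
    (intervalIntegrable_iff_integrableOn_Ioc_of_le hs.le).1
      (intervalIntegral.intervalIntegrable_rpow' he)
  rw [← ofReal_integral_eq_lintegral_ofReal hi ((ae_restrict_iff' measurableSet_Ioc).2
      (ae_of_all _ fun t ht => rpow_nonneg ht.1.le e)),
    ← intervalIntegral.integral_of_le hs.le, integral_rpow (Or.inl he),
    zero_rpow (by linarith), sub_zero]

theorem lintegral_Ioc_rpow_mul_abs_le {p q : ℝ} (hpq : p.HolderConjugate q) {m β : ℝ}
    {F : ℝ → ℝ} (hF : AEStronglyMeasurable F (wm m)) (s : ℝ) :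
    ∫⁻ t in Ioc 0 s, ENNReal.ofReal (t ^ β * |F t|) ≤
      (∫⁻ t in Ioc 0 s, ENNReal.ofReal (t ^ ((β - m) * q + m))) ^ (1 / q) *
        (∫⁻ t, ‖F t‖ₑ ^ p ∂wm m) ^ (1 / p) := by
  have hweight : AEMeasurable (fun t : ℝ => ENNReal.ofReal (t ^ (β - m)))
      ((wm m).restrict (Ioc 0 s)) := by fun_prop
  have hFe : AEMeasurable (fun t => ‖F t‖ₑ) ((wm m).restrict (Ioc 0 s)) := hF.restrict.enorm
  calc ∫⁻ t in Ioc 0 s, ENNReal.ofReal (t ^ β * |F t|)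
      = ∫⁻ t in Ioc 0 s, ENNReal.ofReal (t ^ m) * (ENNReal.ofReal (t ^ (β - m)) * ‖F t‖ₑ) := by
        refine setLIntegral_congr_fun measurableSet_Ioc fun t ht => ?_
        rw [← ofReal_norm, norm_eq_abs, ← ENNReal.ofReal_mul (rpow_nonneg ht.1.le _),
          ← ENNReal.ofReal_mul (rpow_nonneg ht.1.le _), ← mul_assoc, ← rpow_add ht.1,
          add_sub_cancel]
    _ = ∫⁻ t in Ioc 0 s, ENNReal.ofReal (t ^ (β - m)) * ‖F t‖ₑ ∂wm m :=
        (setLIntegral_Ioc_wm (hweight.mul hFe)).symm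
    _ ≤ (∫⁻ t in Ioc 0 s, ENNReal.ofReal (t ^ (β - m)) ^ q ∂wm m) ^ (1 / q) *
          (∫⁻ t in Ioc 0 s, ‖F t‖ₑ ^ p ∂wm m) ^ (1 / p) :=
        ENNReal.lintegral_mul_le_Lp_mul_Lq _ hpq.symm hweight hFe
    _ ≤ _ := by
        refine mul_le_mul' (le_of_eq ?_)
          (ENNReal.rpow_le_rpow (setLIntegral_le_lintegral _ _) hpq.one_div_nonneg)
        rw [setLIntegral_Ioc_wm (hweight.pow aemeasurable_const)]
        congr 1
        refine setLIntegral_congr_fun measurableSet_Ioc fun t ht => ?_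
        rw [ENNReal.ofReal_rpow_of_nonneg (rpow_nonneg ht.1.le _) hpq.symm.nonneg,
          ← ENNReal.ofReal_mul (rpow_nonneg ht.1.le _), ← rpow_mul ht.1.le, ← rpow_add ht.1,
          add_comm]

theorem exists_setIntegral_Ioc_abs_rpow_mul_le {p m β : ℝ} (hp : 1 < p) {F : ℝ → ℝ}
    (hF : MemLp F (ENNReal.ofReal p) (wm m)) (hγ : 0 < β + 1 - (m + 1) / p) :
    ∃ C, ∀ s, 0 < s → IntegrableOn (fun t => t ^ β * F t) (Ioc 0 s) ∧
      ∫ t in Ioc 0 s, |t ^ β * F t| ≤ C * s ^ (β + 1 - (m + 1) / p) := by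
  set γ := β + 1 - (m + 1) / p
  obtain ⟨q, hpq⟩ : ∃ q, p.HolderConjugate q := ⟨_, .conjExponent hp⟩
  have he : (β - m) * q + m + 1 = γ * q := by
    have h := hpq.symm.div_conj_eq_sub_one
    rw [div_eq_mul_inv] at h
    linear_combination (m + 1) * h
  have hK : eLpNorm F (ENNReal.ofReal p) (wm m) = (∫⁻ t, ‖F t‖ₑ ^ p ∂wm m) ^ (1 / p) := by
    rw [eLpNorm_eq_lintegral_rpow_enorm_toReal (by simpa using hpq.pos) ENNReal.ofReal_ne_top,
      ENNReal.toReal_ofReal hpq.nonneg]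
  set C := ((γ * q)⁻¹) ^ (1 / q) * (eLpNorm F (ENNReal.ofReal p) (wm m)).toReal
  have hγq : 0 < γ * q := mul_pos hγ hpq.symm.pos
  have hC : 0 ≤ C := by positivity
  refine ⟨C, fun s hs => ?_⟩
  have hlintegral : ∫⁻ t in Ioc 0 s, ‖t ^ β * F t‖ₑ ≤ ENNReal.ofReal (C * s ^ γ) := calc
    ∫⁻ t in Ioc 0 s, ‖t ^ β * F t‖ₑ = ∫⁻ t in Ioc 0 s, ENNReal.ofReal (t ^ β * |F t|) := by
        refine setLIntegral_congr_fun measurableSet_Ioc fun t ht => ?_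
        rw [← ofReal_norm, norm_mul, norm_eq_abs, norm_eq_abs,
          abs_of_nonneg (rpow_nonneg ht.1.le _)]
    _ ≤ (∫⁻ t in Ioc 0 s, ENNReal.ofReal (t ^ ((β - m) * q + m))) ^ (1 / q) *
          eLpNorm F (ENNReal.ofReal p) (wm m) := by
        rw [hK]; exact lintegral_Ioc_rpow_mul_abs_le hpq hF.1 s
    _ = ENNReal.ofReal (C * s ^ γ) := by
        rw [lintegral_Ioc_rpow (by linarith) hs, he, ← ENNReal.ofReal_toReal hF.2.ne,
          ENNReal.ofReal_rpow_of_nonneg (by positivity) hpq.symm.one_div_nonneg,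
          ← ENNReal.ofReal_mul (by positivity)]
        congr 1
        rw [div_eq_mul_inv, mul_rpow (by positivity) (by positivity), ← rpow_mul hs.le,
          ← mul_mul_div γ hpq.symm.ne_zero]
        ring
  have hmeas : AEStronglyMeasurable (fun t => t ^ β * F t) (volume.restrict (Ioc 0 s)) :=
    (measurable_id.pow_const β).aestronglyMeasurable.mul <| hF.1.mono_ac <|
      (Measure.restrict_mono Ioc_subset_Ioi_self le_rfl).absolutelyContinuous.trans
        (volume_restrict_Ioi_absolutelyContinuous_wm m)
  refine ⟨⟨hmeas, hlintegral.trans_lt ENNReal.ofReal_lt_top⟩, ?_⟩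
  have hnorm := integral_norm_eq_lintegral_enorm hmeas
  simp only [norm_eq_abs] at hnorm
  rw [hnorm]
  exact ENNReal.toReal_le_of_le_ofReal (by positivity) hlintegral

theorem stmt17_general (p m α₂ : ℝ) (hp : 1 < p)
    (h : (m + 1) / p < 2 - α₂)
    (u u' u'' : ℝ → ℝ)
    (h1 : ∀ y, 0 < y → HasDerivAt u (u' y) y)
    (h2 : ∀ y, 0 < y → HasDerivAt u' (u'' y) y)
    (hf : MemLp (fun y => y ^ α₂ * (u'' y + u' y / y)) (ENNReal.ofReal p) (wm m)) :
    (∃ L : ℝ, Tendsto u (𝓝[>] 0) (𝓝 L)) ↔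
      Tendsto (fun y => y * u' y) (𝓝[>] 0) (𝓝 0) := by
  have hv : ∀ y ∈ Ioc (0 : ℝ) 1, HasDerivAt (fun y => y * u' y)
      (y ^ (1 - α₂) * (y ^ α₂ * (u'' y + u' y / y))) y := by
    intro y hy
    refine ((hasDerivAt_id y).mul (h2 y hy.1)).congr_deriv ?_
    rw [← mul_assoc, ← rpow_add hy.1, sub_add_cancel, rpow_one, mul_add,
      mul_div_cancel₀ _ hy.1.ne', id, one_mul, add_comm]
  obtain ⟨C, hC⟩ := exists_setIntegral_Ioc_abs_rpow_mul_le (β := 1 - α₂) hp hf (by linarith)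
  obtain ⟨v₀, hv₀, hv_eq⟩ :=
    exists_tendsto_nhdsGT_of_integrableOn_deriv zero_lt_one hv (hC 1 one_pos).1
  have hbound : ∀ y ∈ Ioc (0 : ℝ) 1, |y * u' y - v₀| ≤ C * y ^ (1 - α₂ + 1 - (m + 1) / p) := by
    intro y hy
    rw [hv_eq y hy, add_sub_cancel_left, intervalIntegral.integral_of_le hy.1.le]
    exact abs_integral_le_integral_abs.trans (hC y hy.1).2
  obtain ⟨W, hW⟩ := exists_tendsto_sub_mul_log_of_abs_mul_deriv_sub_le (by linarith) h1 hbound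
  rw [exists_tendsto_nhdsGT_zero_iff_of_tendsto_sub_mul_log hW]
  exact ⟨fun hzero => hzero ▸ hv₀, tendsto_nhds_unique hv₀⟩

/-- Case `c = 1`: if `(m+1)/p < 2-α₂` and `y^{α₂}(u'' + u'/y) ∈ L^p_m`, then
`lim_{y→0⁺} u(y)` exists in `ℝ` iff `lim_{y→0⁺} y u'(y) = 0`. -/
theorem stmt17 (p m α₂ : ℝ) (hp : 1 < p) (hα : α₂ < 2)
    (h : (m + 1) / p < 2 - α₂)
    (u u' u'' : ℝ → ℝ)
    (h1 : ∀ y, 0 < y → HasDerivAt u (u' y) y)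
    (h2 : ∀ y, 0 < y → HasDerivAt u' (u'' y) y)
    (hf : MemLp (fun y => y ^ α₂ * (u'' y + u' y / y)) (ENNReal.ofReal p) (wm m)) :
    (∃ L : ℝ, Tendsto u (𝓝[>] 0) (𝓝 L)) ↔
      Tendsto (fun y => y * u' y) (𝓝[>] 0) (𝓝 0) :=
  stmt17_general p m α₂ hp h u u' u'' h1 h2 hf
end
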